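/- Let $d \geq 4$ and let $a_1 = \cdots = a_{d-1} = a$ for a sufficiently large integer $a$ (depending on $d$). Define $h_k = s_k + s_{d-k}$ where $s_k$ is the $k$-th elementary symmetric polynomial in $a_1, \ldots, a_{d-1}$ (so $s_k = \binom{d-1}{k}a^k$, with $s_j = 0$ for $j > d-1$ or $j < 0$, and $s_0 = 1$). Then $h_1 > h_2 > \cdots > h_{\lfloor d/2 \rfloor}$. -/

import Mathlib

lemma sum_powersetCard_const (n k a : ℕ) :
    ∑ T ∈ Finset.powersetCard k (Finset.univ : Finset (Fin n)), ∏ _i ∈ T, a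
      = n.choose k * a ^ k := by
  rw [Finset.sum_congr rfl
      (fun T hT => by rw [Finset.prod_const, (Finset.mem_powersetCard.mp hT).2]),
    Finset.sum_const, Finset.card_powersetCard, Finset.card_univ, Fintype.card_fin,
    smul_eq_mul]

lemma choose_le_two_pow' (n k : ℕ) : n.choose k ≤ 2 ^ n := by
  rcases le_or_gt k n with h | h
  · calc n.choose k ≤ ∑ i ∈ Finset.range (n + 1), n.choose i :=
        Finset.single_le_sum (fun i _ => Nat.zero_le _)
          (Finset.mem_range.mpr (Nat.lt_succ_of_le h))
    _ = 2 ^ n := Nat.sum_range_choose n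
  · rw [Nat.choose_eq_zero_of_lt h]; positivity

/-- For `d ≥ 4` and `a₁ = ⋯ = a_{d-1} = a` with `a` sufficiently large,
the Hilbert vector `h_k = s_k + s_{d-k}` (elementary symmetric polynomials of the `a_i`)
satisfies `h_1 > h_2 > ⋯ > h_{⌊d/2⌋}`. -/
theorem turan_hilbert_totally_nonunimodal (d : ℕ) (hd : 4 ≤ d) :
    ∃ N : ℕ, ∀ a : ℕ, N ≤ a →
      ∀ k : ℕ, 1 ≤ k → k + 1 ≤ d / 2 →
        ((∑ T ∈ Finset.powersetCard k (Finset.univ : Finset (Fin (d - 1))), ∏ _i ∈ T, a) +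
            ∑ T ∈ Finset.powersetCard (d - k) (Finset.univ : Finset (Fin (d - 1))), ∏ _i ∈ T, a) >
          ((∑ T ∈ Finset.powersetCard (k + 1) (Finset.univ : Finset (Fin (d - 1))), ∏ _i ∈ T, a) +
            ∑ T ∈ Finset.powersetCard (d - (k + 1)) (Finset.univ : Finset (Fin (d - 1))),
              ∏ _i ∈ T, a) := by
  refine ⟨2 ^ d + 1, fun a ha k hk hkd => ?_⟩
  rw [sum_powersetCard_const, sum_powersetCard_const, sum_powersetCard_const,
    sum_powersetCard_const]
  have h1 : k + 1 ≤ d - k - 1 := by omega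
  have h2 : d - k ≤ d - 1 := by omega
  have h3 : d - (k + 1) = d - k - 1 := by omega
  have h2d : 0 < 2 ^ d := Nat.pow_pos (by norm_num)
  have ha1 : 1 ≤ a := by omega
  have hck : 1 ≤ (d - 1).choose (d - k) := Nat.choose_pos h2
  rw [h3]
  calc (d - 1).choose (k + 1) * a ^ (k + 1) + (d - 1).choose (d - k - 1) * a ^ (d - k - 1)
      ≤ 2 ^ (d - 1) * a ^ (d - k - 1) + 2 ^ (d - 1) * a ^ (d - k - 1) := by
        gcongr <;> first
          | exact choose_le_two_pow' _ _
          | exact ha1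
    _ = 2 * 2 ^ (d - 1) * a ^ (d - k - 1) := by ring
    _ ≤ 2 ^ d * a ^ (d - k - 1) := by
        have : 2 * 2 ^ (d - 1) = 2 ^ d := by
          rw [← pow_succ']
          congr 1
          omega
        rw [this]
    _ < a * a ^ (d - k - 1) := by
        have hpos : 0 < a ^ (d - k - 1) := Nat.pow_pos ha1
        exact (Nat.mul_lt_mul_right hpos).mpr (by omega)
    _ = a ^ (d - k) := by
        rw [← pow_succ']
        congr 1
        omega
    _ ≤ (d - 1).choose (d - k) * a ^ (d - k) := Nat.le_mul_of_pos_left _ hck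
    _ ≤ (d - 1).choose k * a ^ k + (d - 1).choose (d - k) * a ^ (d - k) := Nat.le_add_left _ _
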